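/- Let n ≥ 3 and let H be the complete (n-1)-uniform hypergraph on {1,...,n} (every (n-1)-element subset of {1,...,n} is a hyperedge). Then dim HC_0(Δ(H)) = n and dim HC_{-1}(Δ(H)) = 1. -/

import Mathlib

open Finset

/-! ## The cyclic coloring complex machinery.

Vertices `1, ..., n` of the paper are represented by `Fin n` (vertex `i ↦ i - 1`);
in particular the distinguished vertex `1` is the element of `Fin n` whose value is `0`.

An ordered set partition `(B_1, ..., B_{m+1})` of `{1, ..., n}` is represented by a
function `B : Fin (m+1) → Finset (Fin n)`.  Each cyclic equivalence class
`[B_1, ..., B_{m+1}]` is represented by its unique representative having `1 ∈ B_1`. -/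

/-- Raw blocks: an `(m+1)`-tuple of finsets of vertices. -/
abbrev Blocks (n m : ℕ) := Fin (m + 1) → Finset (Fin n)

/-- `B` is an ordered set partition of `Fin n` into `m + 1` nonempty blocks whose first
block contains the vertex with value `0` (i.e. the vertex called `1` in the paper);
such functions are canonical representatives of the cyclic equivalence classes
`[B_1, ..., B_{m+1}]`. -/
def IsCPartition {n m : ℕ} (B : Blocks n m) : Prop :=
  (∀ i, (B i).Nonempty) ∧
  (∀ i j, i ≠ j → Disjoint (B i) (B j)) ∧
  (∀ v : Fin n, ∃ i, v ∈ B i) ∧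
  (∀ v : Fin n, v.val = 0 → v ∈ B 0)

/-- Merging blocks `j` and `j + 1` of a partition into `m + 2` blocks. -/
def mergeBlocks {n m : ℕ} (B : Blocks n (m + 1)) (j : Fin (m + 1)) : Blocks n m :=
  fun i =>
    if i.val < j.val then B i.castSucc
    else if i.val = j.val then B i.castSucc ∪ B i.succ
    else B i.succ

/-- Merging the last block into the first block:
`[B_1 ∪ B_{m+2}, B_2, ..., B_{m+1}]`. -/
def mergeWrap {n m : ℕ} (B : Blocks n (m + 1)) : Blocks n m :=
  fun i => if i.val = 0 then B 0 ∪ B (Fin.last (m + 1)) else B i.castSucc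

/-- The chain group spanned (over `ℚ`, a field of characteristic zero) by the classes of
ordered set partitions of `Fin n` into `m + 1` nonempty blocks satisfying the predicate
`Q` (a predicate on the underlying set of blocks).  This is the degree `r = m - 1` term
of the corresponding chain complex. -/
abbrev CChain (n : ℕ) (Q : Finset (Finset (Fin n)) → Prop) (m : ℕ) : Type :=
  {B : Blocks n m // IsCPartition B ∧ Q (Finset.univ.image B)} →₀ ℚ

open Classical in
/-- The basis element of `CChain n Q m` corresponding to `B`, or `0` if `B` is not a
partition satisfying `Q`. -/
noncomputable def basisElt (n : ℕ) (Q : Finset (Finset (Fin n)) → Prop) (m : ℕ)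
    (B : Blocks n m) : CChain n Q m :=
  if h : IsCPartition B ∧ Q (Finset.univ.image B) then Finsupp.single ⟨B, h⟩ 1 else 0

/-- The boundary of a single class `[B_1, ..., B_{r+2}]` (with `r = m`):
`∂_r [B_1, ..., B_{r+2}] = ∑_{i=1}^{r+1} (-1)^{i+1} [B_1, ..., B_i ∪ B_{i+1}, ..., B_{r+2}]
+ (-1)^{r+3} [B_1 ∪ B_{r+2}, B_2, ..., B_{r+1}]`, where any term that does not satisfy
`Q` is set to zero (for subcomplexes this never happens, and for quotient complexes this
is the induced boundary). -/
noncomputable def bdryTerm (n : ℕ) (Q : Finset (Finset (Fin n)) → Prop) (m : ℕ)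
    (B : Blocks n (m + 1)) : CChain n Q m :=
  (∑ j : Fin (m + 1), ((-1 : ℚ) ^ ((j : ℕ) + 2)) • basisElt n Q m (mergeBlocks B j)) +
    ((-1 : ℚ) ^ (m + 3)) • basisElt n Q m (mergeWrap B)

/-- The boundary map `∂_m : C_m → C_{m-1}` (from partitions into `m + 2` blocks to
partitions into `m + 1` blocks). -/
noncomputable def bd (n : ℕ) (Q : Finset (Finset (Fin n)) → Prop) (m : ℕ) :
    CChain n Q (m + 1) →ₗ[ℚ] CChain n Q m :=
  Finsupp.linearCombination ℚ (fun P => bdryTerm n Q m P.1)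

/-- The chain complex, reindexed over `ℕ`: `Ch n Q t` is the degree `t - 2` chain group
`C_{t-2}` (so `Ch 0 = C_{-2} = 0` and `Ch (t+1) = C_{t-1}`). -/
noncomputable def Ch (n : ℕ) (Q : Finset (Finset (Fin n)) → Prop) : ℕ → Type
  | 0 => Empty →₀ ℚ
  | (t + 1) => CChain n Q t

noncomputable instance instChAddCommGroup (n : ℕ) (Q : Finset (Finset (Fin n)) → Prop) :
    ∀ s, AddCommGroup (Ch n Q s)
  | 0 => inferInstanceAs (AddCommGroup (Empty →₀ ℚ))
  | (t + 1) => inferInstanceAs (AddCommGroup (CChain n Q t))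

noncomputable instance instChModule (n : ℕ) (Q : Finset (Finset (Fin n)) → Prop) :
    ∀ s, Module ℚ (Ch n Q s)
  | 0 => inferInstanceAs (Module ℚ (Empty →₀ ℚ))
  | (t + 1) => inferInstanceAs (Module ℚ (CChain n Q t))

/-- The boundary map `∂_{s-1} : C_{s-1} → C_{s-2}` in the reindexed complex;
`bdry n Q 0` is the zero map `∂_{-1} : C_{-1} → 0`. -/
noncomputable def bdry (n : ℕ) (Q : Finset (Finset (Fin n)) → Prop) :
    ∀ s, Ch n Q (s + 1) →ₗ[ℚ] Ch n Q s
  | 0 => 0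
  | (t + 1) => bd n Q t

/-- `HCmod n Q s` is the homology group `HC_{s-1} = ker ∂_{s-1} / im ∂_s` of the chain
complex determined by `Q`. -/
noncomputable abbrev HCmod (n : ℕ) (Q : Finset (Finset (Fin n)) → Prop) (s : ℕ) :=
  LinearMap.ker (bdry n Q s) ⧸
    Submodule.comap (LinearMap.ker (bdry n Q s)).subtype
      (LinearMap.range (bdry n Q (s + 1)))

/-- `HCdim n Q r` is the dimension of the homology group `HC_r` (for `r ≥ -1`) of the
chain complex determined by `Q`. -/
noncomputable def HCdim (n : ℕ) (Q : Finset (Finset (Fin n)) → Prop) (r : ℤ) : ℕ :=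
  Module.finrank ℚ (HCmod n Q (r + 1).toNat)

/-- Binomial coefficient `C(a, b)` with an integer lower index (zero when `b < 0`). -/
def chooseZ (a : ℕ) (b : ℤ) : ℕ := if b < 0 then 0 else a.choose b.toNat

/-- The predicate defining `Δ(H)`: some block contains a hyperedge. -/
def QsomeBlockHasEdge (n : ℕ) (isEdge : Finset (Fin n) → Prop) :
    Finset (Finset (Fin n)) → Prop :=
  fun blocks => ∃ S ∈ blocks, ∃ e, isEdge e ∧ e ⊆ S

/-- The predicate defining `Δ(H)^C = Δ(E_n)/Δ(H)`: no block contains a hyperedge. -/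
def QnoBlockHasEdge (n : ℕ) (isEdge : Finset (Fin n) → Prop) :
    Finset (Finset (Fin n)) → Prop :=
  fun blocks => ∀ S ∈ blocks, ∀ e, isEdge e → ¬ e ⊆ S

/-- The predicate defining `Δ(E_n)`: all partitions are allowed. -/
def Qtrue (n : ℕ) : Finset (Finset (Fin n)) → Prop := fun _ => True

/-
The boundary `∂₀` vanishes for every predicate, because both faces of `[B₁, B₂]` equal
`[B₁ ∪ B₂]` with opposite signs.  If some block of a partition contains an `(n-1)`-set, the
other blocks hold at most one vertex between them, so `Δ(H)` has no chains with three or more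
blocks and `∂₁ = 0` as well.  Hence `HC₀` and `HC₋₁` are the full chain groups, spanned by
the `n` partitions `{{x}, V ∖ {x}}` and by the single partition `{V}`.
-/

section Partition

variable {n m : ℕ}

theorem IsCPartition.sum_card {B : Blocks n m} (hB : IsCPartition B) :
    ∑ i, (B i).card = n := by
  obtain ⟨-, hdisj, hcov, -⟩ := hB
  have hunion : univ.biUnion B = univ := eq_univ_of_forall fun v => by
    simpa only [mem_biUnion, mem_univ, true_and] using hcov v
  rw [← card_biUnion fun i _ j _ hij => hdisj i j hij, hunion, card_univ, Fintype.card_fin]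

theorem IsCPartition.card_add_le {B : Blocks n m} (hB : IsCPartition B) (i : Fin (m + 1)) :
    (B i).card + m ≤ n := by
  have hrest : m ≤ ∑ j ∈ univ.erase i, (B j).card := by
    simpa using card_nsmul_le_sum (univ.erase i) (fun j => (B j).card) 1
      fun j _ => card_pos.mpr (hB.1 j)
  have hsum := hB.sum_card
  rw [← add_sum_erase univ _ (mem_univ i)] at hsum
  omega

theorem IsCPartition.eq_compl_one {B : Blocks n 1} (hB : IsCPartition B) : B 0 = (B 1)ᶜ := by
  obtain ⟨-, hdisj, hcov, -⟩ := hB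
  ext v
  rw [mem_compl]
  constructor
  · exact fun h0 h1 => disjoint_left.mp (hdisj 0 1 (by decide)) h0 h1
  · intro h1
    obtain ⟨i, hi⟩ := hcov v
    fin_cases i
    · exact hi
    · exact absurd hi h1

end Partition

theorem someBlockHasEdge_card_eq_iff {n k : ℕ} {blocks : Finset (Finset (Fin n))} :
    QsomeBlockHasEdge n (fun e => e.card = k) blocks ↔ ∃ S ∈ blocks, k ≤ S.card := by
  constructor
  · rintro ⟨S, hS, e, rfl, heS⟩
    exact ⟨S, hS, card_le_card heS⟩
  · rintro ⟨S, hS, hk⟩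
    obtain ⟨e, heS, rfl⟩ := exists_subset_card_eq hk
    exact ⟨S, hS, e, rfl, heS⟩

theorem isEmpty_someBlockHasEdge_of_lt {n k m : ℕ} (h : n < k + m) :
    IsEmpty {B : Blocks n m //
      IsCPartition B ∧ QsomeBlockHasEdge n (fun e => e.card = k) (univ.image B)} := by
  refine ⟨fun ⟨B, hB, hQ⟩ => ?_⟩
  obtain ⟨_, hS, hk⟩ := someBlockHasEdge_card_eq_iff.mp hQ
  obtain ⟨i, -, rfl⟩ := mem_image.mp hS
  have := hB.card_add_le i
  omega

theorem bd_zero (n : ℕ) (Q : Finset (Finset (Fin n)) → Prop) : bd n Q 0 = 0 := by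
  have hfaces (B : Blocks n 1) : bdryTerm n Q 0 B = 0 := by
    have : mergeBlocks B 0 = mergeWrap B := funext fun i => by fin_cases i; rfl
    rw [bdryTerm, Fin.sum_univ_one, this]
    norm_num
  ext P
  simp [bd, hfaces]

theorem finrank_homology_of_eq_zero {M N P : Type*} [AddCommGroup M] [Module ℚ M]
    [AddCommGroup N] [Module ℚ N] [AddCommGroup P] [Module ℚ P]
    {f : M →ₗ[ℚ] N} {g : P →ₗ[ℚ] M} (hf : f = 0) (hg : g = 0) :
    Module.finrank ℚ (LinearMap.ker f ⧸ (LinearMap.range g).comap (LinearMap.ker f).subtype) =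
      Module.finrank ℚ M := by
  subst hf hg
  have hbot : (LinearMap.range (0 : P →ₗ[ℚ] M)).comap (LinearMap.ker (0 : M →ₗ[ℚ] N)).subtype
      = ⊥ := by
    rw [LinearMap.range_zero, Submodule.comap_bot, Submodule.ker_subtype]
  exact ((Submodule.quotEquivOfEqBot _ hbot).trans
    ((LinearEquiv.ofEq _ _ LinearMap.ker_zero).trans Submodule.topEquiv)).finrank_eq

theorem finrank_cChain (n : ℕ) (Q : Finset (Finset (Fin n)) → Prop) (m : ℕ) :
    Module.finrank ℚ (CChain n Q m) =
      Nat.card {B : Blocks n m // IsCPartition B ∧ Q (univ.image B)} :=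
  Module.finrank_eq_nat_card_basis Finsupp.basisSingleOne

theorem card_oneBlock_someBlockHasEdge {n k : ℕ} (hn : 0 < n) (hk : k ≤ n) :
    Nat.card {B : Blocks n 0 //
      IsCPartition B ∧ QsomeBlockHasEdge n (fun e => e.card = k) (univ.image B)} = 1 := by
  have hB : IsCPartition (fun _ : Fin 1 => (univ : Finset (Fin n))) :=
    ⟨fun _ => univ_nonempty_iff.mpr ⟨⟨0, hn⟩⟩,
      fun i j hij => absurd (Subsingleton.elim (α := Fin 1) i j) hij,
      fun _ => ⟨0, mem_univ _⟩, fun _ _ => mem_univ _⟩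
  have hQ : QsomeBlockHasEdge n (fun e => e.card = k)
      (univ.image fun _ : Fin 1 => (univ : Finset (Fin n))) :=
    someBlockHasEdge_card_eq_iff.mpr ⟨univ, mem_image_of_mem _ (mem_univ 0), by simpa⟩
  refine Nat.card_eq_one_iff_exists.mpr ⟨⟨_, hB, hQ⟩, fun ⟨B, hB', _⟩ => Subtype.ext ?_⟩
  funext i
  refine eq_univ_of_forall fun v => ?_
  obtain ⟨j, hj⟩ := hB'.2.2.1 v
  rwa [Subsingleton.elim (α := Fin 1) i j]

section TwoBlocks

variable {n : ℕ}

def pairBlocks (S : Finset (Fin n)) : Blocks n 1 := ![Sᶜ, S]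

/-- The block of `{{x}, V ∖ {x}}` avoiding the vertex `0`. -/
def cutVertex (x : Fin n) : Finset (Fin n) := if x.val = 0 then {x}ᶜ else {x}

theorem IsCPartition.eq_pairBlocks {B : Blocks n 1} (hB : IsCPartition B) :
    B = pairBlocks (B 1) := by
  funext i
  fin_cases i
  · exact hB.eq_compl_one
  · rfl

theorem isCPartition_pairBlocks {S : Finset (Fin n)} (hS : S.Nonempty) (hSc : Sᶜ.Nonempty)
    (h0 : ∀ v : Fin n, v.val = 0 → v ∉ S) : IsCPartition (pairBlocks S) := by
  refine ⟨fun i => by fin_cases i <;> assumption, fun i j hij => ?_, fun v => ?_,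
    fun v hv => mem_compl.mpr (h0 v hv)⟩
  · fin_cases i <;> fin_cases j
    all_goals first
      | exact absurd rfl hij
      | exact disjoint_compl_left
      | exact disjoint_compl_right
  · by_cases hv : v ∈ S
    · exact ⟨1, hv⟩
    · exact ⟨0, mem_compl.mpr hv⟩

theorem isCPartition_pairBlocks_cutVertex (hn : 2 ≤ n) (x : Fin n) :
    IsCPartition (pairBlocks (cutVertex x)) := by
  have hcompl : ({x}ᶜ : Finset (Fin n)).Nonempty := by
    rw [← card_pos, card_compl, card_singleton, Fintype.card_fin]
    omega
  by_cases hx : x.val = 0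
  · refine isCPartition_pairBlocks (by simpa [cutVertex, hx]) (by simp [cutVertex, hx])
      fun v hv => ?_
    simp [cutVertex, hx, Fin.ext_iff, hv]
  · refine isCPartition_pairBlocks (by simp [cutVertex, hx]) (by simpa [cutVertex, hx])
      fun v hv => ?_
    simp only [cutVertex, hx, if_false, mem_singleton]
    rintro rfl
    exact hx hv

theorem cutVertex_injective (hn : 3 ≤ n) : Function.Injective (cutVertex (n := n)) := by
  have hcard (x y : Fin n) : ({x} : Finset (Fin n)) ≠ {y}ᶜ := fun h => by
    have := congrArg card h
    rw [card_singleton, card_compl, card_singleton, Fintype.card_fin] at this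
    omega
  intro x y hxy
  by_cases hx : x.val = 0 <;> by_cases hy : y.val = 0 <;>
    simp only [cutVertex, hx, hy, if_true, if_false] at hxy
  · exact Fin.ext (hx.trans hy.symm)
  · exact absurd hxy.symm (hcard y x)
  · exact absurd hxy (hcard x y)
  · exact singleton_injective hxy

theorem IsCPartition.eq_pairBlocks_cutVertex {B : Blocks n 1} (hB : IsCPartition B)
    {i : Fin 2} {y : Fin n} (hy : B i = {y}) : B = pairBlocks (cutVertex y) := by
  rw [hB.eq_pairBlocks]
  congr 1
  fin_cases i
  · change B 0 = {y} at hy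
    have hy0 : y.val = 0 :=
      congrArg Fin.val (mem_singleton.mp (hy ▸ hB.2.2.2 ⟨0, y.pos⟩ rfl)).symm
    simp only [cutVertex, hy0, if_true, ← hy, hB.eq_compl_one, compl_compl]
  · have hy0 : y.val ≠ 0 := fun h =>
      mem_compl.mp (hB.eq_compl_one ▸ hB.2.2.2 y h) (hy ▸ mem_singleton_self y)
    simp only [cutVertex, hy0, if_false, ← hy]
    rfl

theorem card_twoBlocks_someBlockHasEdge (hn : 3 ≤ n) :
    Nat.card {B : Blocks n 1 //
      IsCPartition B ∧ QsomeBlockHasEdge n (fun e => e.card = n - 1) (univ.image B)} = n := by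
  have hQ (x : Fin n) : QsomeBlockHasEdge n (fun e => e.card = n - 1)
      (univ.image (pairBlocks (cutVertex x))) := by
    refine someBlockHasEdge_card_eq_iff.mpr ⟨{x}ᶜ, mem_image.mpr ?_, by
      rw [card_compl, card_singleton, Fintype.card_fin]⟩
    by_cases hx : x.val = 0
    · exact ⟨1, mem_univ _, by simp [pairBlocks, cutVertex, hx]⟩
    · exact ⟨0, mem_univ _, by simp [pairBlocks, cutVertex, hx]⟩
  let split (x : Fin n) : {B : Blocks n 1 //
      IsCPartition B ∧ QsomeBlockHasEdge n (fun e => e.card = n - 1) (univ.image B)} :=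
    ⟨_, isCPartition_pairBlocks_cutVertex (by omega) x, hQ x⟩
  suffices Function.Bijective split by
    rw [← Nat.card_eq_of_bijective split this, Nat.card_eq_fintype_card, Fintype.card_fin]
  refine ⟨fun x y hxy => cutVertex_injective hn (congrFun (congrArg Subtype.val hxy) 1),
    fun ⟨B, hB, hBQ⟩ => ?_⟩
  obtain ⟨_, hS, hbig⟩ := someBlockHasEdge_card_eq_iff.mp hBQ
  obtain ⟨i, -, rfl⟩ := mem_image.mp hS
  have hsum : (B 0).card + (B 1).card = n := by simpa [Fin.sum_univ_two] using hB.sum_card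
  have hpos (j : Fin 2) : 0 < (B j).card := card_pos.mpr (hB.1 j)
  have hsingleton : ∃ j : Fin 2, (B j).card = 1 := by
    obtain rfl | rfl : i = 0 ∨ i = 1 := by fin_cases i <;> simp
    · exact ⟨1, by have := hpos 1; omega⟩
    · exact ⟨0, by have := hpos 0; omega⟩
  obtain ⟨j, hj⟩ := hsingleton
  obtain ⟨y, hy⟩ := card_eq_one.mp hj
  exact ⟨y, Subtype.ext (hB.eq_pairBlocks_cutVertex hy).symm⟩

end TwoBlocks

/-- Let `n ≥ 3` and let `H` be the complete `(n-1)`-uniform hypergraph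
on `{1, ..., n}`.  Then `dim HC_0(Δ(H)) = n` and `dim HC_{-1}(Δ(H)) = 1`. -/
theorem statement3 (n : ℕ) (hn : 3 ≤ n) :
    HCdim n (QsomeBlockHasEdge n (fun e => e.card = n - 1)) 0 = n ∧
    HCdim n (QsomeBlockHasEdge n (fun e => e.card = n - 1)) (-1) = 1 := by
  set Q := QsomeBlockHasEdge n (fun e => e.card = n - 1)
  have hbd1 : bd n Q 1 = 0 := by
    have := isEmpty_someBlockHasEdge_of_lt (n := n) (k := n - 1) (m := 2) (by omega)
    exact LinearMap.ext fun x => by simp [Subsingleton.elim x 0]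
  constructor
  · refine (finrank_homology_of_eq_zero (f := bdry n Q 1) (g := bdry n Q 2)
      (bd_zero n Q) hbd1).trans ?_
    exact (finrank_cChain n Q 1).trans (card_twoBlocks_someBlockHasEdge hn)
  · refine (finrank_homology_of_eq_zero (f := bdry n Q 0) (g := bdry n Q 1)
      rfl (bd_zero n Q)).trans ?_
    exact (finrank_cChain n Q 0).trans (card_oneBlock_someBlockHasEdge (by omega) (by omega))
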